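/- arXiv:1106.5087 — 4 statements merged into one kernel-verified Lean document; each statement's English description precedes it below -/
import Mathlib

section
/- Let A = M - N be an M-splitting of A (i.e., M is an M-matrix and N ≥ 0 entrywise). Then ρ(M⁻¹N) < 1 if and only if A is an M-matrix. -/
/-!
Write `T = M⁻¹N ≥ 0`, so that `A = M (1 - T)`. If `ρ(T) < 1`, Gelfand's formula gives `Tᵏ → 0`,
so the Neumann series `∑ Tᵏ` converges to `(1 - T)⁻¹ ≥ 0` and `A⁻¹ = (1 - T)⁻¹ M⁻¹ ≥ 0`.
Conversely, if `A⁻¹ ≥ 0` then `(1 - T)⁻¹ = A⁻¹M = 1 + A⁻¹N ≥ 0`. For an eigenpair `Tv = μv` the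
vector `y = |v|` satisfies `|μ| y ≤ T y`, so `|μ| ≥ 1` would give `(1 - T) y ≤ 0`, hence
`y = (1 - T)⁻¹ (1 - T) y ≤ 0` and `v = 0`.
-/

open Matrix BigOperators Finset

/-- Spectral radius of a real matrix: supremum of norms of its complex eigenvalues. -/
noncomputable def specRad {n : ℕ} (A : Matrix (Fin n) (Fin n) ℝ) : ℝ :=
  sSup ((fun μ : ℂ => ‖μ‖) '' spectrum ℂ (A.map (algebraMap ℝ ℂ)))

/-- A Z-matrix has nonpositive off-diagonal entries. -/
def IsZMatrix {n : ℕ} (A : Matrix (Fin n) (Fin n) ℝ) : Prop :=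
  ∀ i j, i ≠ j → A i j ≤ 0

/-- An M-matrix is a nonsingular Z-matrix with entrywise nonnegative inverse. -/
def IsMMatrix {n : ℕ} (A : Matrix (Fin n) (Fin n) ℝ) : Prop :=
  IsZMatrix A ∧ IsUnit A.det ∧ ∀ i j, 0 ≤ A⁻¹ i j

/-- `-L`: the strictly lower triangular part of `A` (so `lowerPart A ≥ 0` for a Z-matrix). -/
def lowerPart {n : ℕ} (A : Matrix (Fin n) (Fin n) ℝ) : Matrix (Fin n) (Fin n) ℝ :=
  Matrix.of fun i j => if (j : ℕ) < (i : ℕ) then -A i j else 0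

/-- `-U`: the strictly upper triangular part of `A`. -/
def upperPart {n : ℕ} (A : Matrix (Fin n) (Fin n) ℝ) : Matrix (Fin n) (Fin n) ℝ :=
  Matrix.of fun i j => if (i : ℕ) < (j : ℕ) then -A i j else 0

/-- Diagonal part of `A`. -/
def diagPart {n : ℕ} (A : Matrix (Fin n) (Fin n) ℝ) : Matrix (Fin n) (Fin n) ℝ :=
  Matrix.of fun i j => if i = j then A i j else 0

/-- The preconditioner `P̃ = I + L(α) + U(α)`: unit diagonal, off-diagonal entries `-α_ij a_ij`. -/
def precond {n : ℕ} (α : Fin n → Fin n → ℝ) (A : Matrix (Fin n) (Fin n) ℝ) :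
    Matrix (Fin n) (Fin n) ℝ :=
  Matrix.of fun i j => if i = j then 1 else -(α i j) * A i j

/-- AOR iteration matrix of `B = D_B - L_B - U_B`:
`(D_B - γ L_B)⁻¹ [(1-ω) D_B + (ω-γ) L_B + ω U_B]`. -/
noncomputable def aorMatrix {n : ℕ} (B : Matrix (Fin n) (Fin n) ℝ) (γ ω : ℝ) :
    Matrix (Fin n) (Fin n) ℝ :=
  (diagPart B - γ • lowerPart B)⁻¹ *
    ((1 - ω) • diagPart B + (ω - γ) • lowerPart B + ω • upperPart B)

/-- Irreducibility: the directed graph with an edge `i → j` whenever `A i j ≠ 0`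
is strongly connected. -/
def IsIrreducibleMat {n : ℕ} (A : Matrix (Fin n) (Fin n) ℝ) : Prop :=
  ∀ i j : Fin n, Relation.ReflTransGen (fun a b => A a b ≠ 0) i j


open Filter Topology

theorem tendsto_pow_atTop_nhds_zero_of_spectralRadius_lt_one {A : Type*} [NormedRing A]
    [NormedAlgebra ℂ A] [CompleteSpace A] {a : A} (ha : spectralRadius ℂ a < 1) :
    Tendsto (a ^ ·) atTop (𝓝 0) := by
  obtain ⟨r, hr0, hρr, hr1⟩ := ENNReal.lt_iff_exists_real_btwn.mp ha
  have hroot : ∀ᶠ k : ℕ in atTop, ‖a ^ k‖ ^ (1 / k : ℝ) < r := by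
    filter_upwards [(spectrum.pow_norm_pow_one_div_tendsto_nhds_spectralRadius a).eventually_lt_const
      hρr] with k hk
    exact (ENNReal.ofReal_lt_ofReal_iff_of_nonneg (by positivity)).mp hk
  refine squeeze_zero_norm' ?_
    (tendsto_pow_atTop_nhds_zero_of_lt_one hr0 (ENNReal.ofReal_lt_one.mp hr1))
  filter_upwards [hroot, eventually_ne_atTop 0] with k hk hk0
  calc ‖a ^ k‖ = (‖a ^ k‖ ^ (1 / k : ℝ)) ^ k := by
        rw [one_div, Real.rpow_inv_natCast_pow (norm_nonneg _) hk0]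
    _ ≤ r ^ k := pow_le_pow_left₀ (by positivity) hk.le k

namespace Matrix

variable {ι : Type*} [Fintype ι]

theorem mul_apply_nonneg {P Q : Matrix ι ι ℝ} (hP : ∀ i j, 0 ≤ P i j) (hQ : ∀ i j, 0 ≤ Q i j)
    (i j : ι) : 0 ≤ (P * Q) i j :=
  sum_nonneg fun l _ => mul_nonneg (hP i l) (hQ l j)

theorem norm_mul_norm_le_mulVec_norm {T : Matrix ι ι ℝ} (hT : ∀ i j, 0 ≤ T i j) {μ : ℂ}
    {v : ι → ℂ} (hv : T.map (algebraMap ℝ ℂ) *ᵥ v = μ • v) (i : ι) :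
    ‖μ‖ * ‖v i‖ ≤ (T *ᵥ fun j => ‖v j‖) i :=
  calc ‖μ‖ * ‖v i‖ = ‖∑ j, (T i j : ℂ) * v j‖ := by
        rw [← norm_mul, ← smul_eq_mul, ← Pi.smul_apply μ v, ← hv]; rfl
    _ ≤ ∑ j, ‖(T i j : ℂ) * v j‖ := norm_sum_le _ _
    _ = (T *ᵥ fun j => ‖v j‖) i := by simp [mulVec, dotProduct, abs_of_nonneg (hT i _)]

variable [DecidableEq ι]

theorem exists_mulVec_eq_smul_of_mem_spectrum {K : Type*} [Field K] {A : Matrix ι ι K} {μ : K}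
    (hμ : μ ∈ spectrum K A) : ∃ v ≠ 0, A *ᵥ v = μ • v := by
  rw [← spectrum_toLin', ← Module.End.hasEigenvalue_iff_mem_spectrum] at hμ
  obtain ⟨v, hv⟩ := hμ.exists_hasEigenvector
  exact ⟨v, hv.2, by simpa using hv.apply_eq_smul⟩

theorem isUnit_det_one_sub_of_tendsto_pow {K : Type*} [Field K] [TopologicalSpace K]
    [IsTopologicalRing K] [T2Space K] {T : Matrix ι ι K}
    (hT : Tendsto (T ^ ·) atTop (𝓝 0)) : IsUnit (1 - T).det := by
  have hlim : Tendsto (fun k => (1 - T ^ k).det) atTop (𝓝 1) := by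
    simpa [Function.comp_def] using
      (continuous_id.matrix_det.tendsto _).comp ((tendsto_const_nhds (x := 1)).sub hT)
  rw [isUnit_iff_ne_zero]
  intro h0
  have hzero : ∀ k, (1 - T ^ k).det = 0 := fun k => by
    rw [← mul_neg_geom_sum, det_mul, h0, zero_mul]
  simp only [hzero] at hlim
  exact zero_ne_one (tendsto_nhds_unique tendsto_const_nhds hlim)

theorem tendsto_geom_sum_of_tendsto_pow {R : Type*} [CommRing R] [TopologicalSpace R]
    [IsTopologicalRing R] {T : Matrix ι ι R} (hT : Tendsto (T ^ ·) atTop (𝓝 0))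
    (hdet : IsUnit (1 - T).det) :
    Tendsto (fun k => ∑ m ∈ range k, T ^ m) atTop (𝓝 (1 - T)⁻¹) := by
  have hpartial : ∀ k, ∑ m ∈ range k, T ^ m = (1 - T)⁻¹ * (1 - T ^ k) := fun k => by
    rw [← mul_neg_geom_sum, ← Matrix.mul_assoc, nonsing_inv_mul _ hdet, Matrix.one_mul]
  simp_rw [hpartial]
  simpa using ((tendsto_const_nhds (x := 1)).sub hT).const_mul ((1 - T)⁻¹)

theorem inv_one_sub_apply_nonneg {T : Matrix ι ι ℝ} (hT : ∀ i j, 0 ≤ T i j)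
    (hpow : Tendsto (T ^ ·) atTop (𝓝 0)) (i j : ι) : 0 ≤ (1 - T)⁻¹ i j := by
  have hsum := tendsto_geom_sum_of_tendsto_pow hpow (isUnit_det_one_sub_of_tendsto_pow hpow)
  refine ge_of_tendsto' ((((continuous_apply j).comp (continuous_apply i)).tendsto _).comp hsum)
    fun k => ?_
  show 0 ≤ (∑ m ∈ range k, T ^ m) i j
  rw [sum_apply]
  exact sum_nonneg fun m _ => pow_apply_nonneg hT m i j

theorem tendsto_pow_of_spectralRadius_lt_one {T : Matrix ι ι ℝ}
    (hT : spectralRadius ℂ (T.map (algebraMap ℝ ℂ)) < 1) : Tendsto (T ^ ·) atTop (𝓝 0) := by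
  -- any Banach-algebra norm on complex matrices will do for Gelfand's formula
  let _ := Matrix.linftyOpNormedRing (n := ι) (α := ℂ)
  let _ := Matrix.linftyOpNormedAlgebra (R := ℂ) (n := ι) (α := ℂ)
  have hre : Continuous fun B : Matrix ι ι ℂ => B.map Complex.re :=
    continuous_id.matrix_map Complex.continuous_re
  have hlim := (hre.tendsto 0).comp (tendsto_pow_atTop_nhds_zero_of_spectralRadius_lt_one hT)
  rw [Matrix.map_zero _ Complex.zero_re] at hlim
  refine hlim.congr fun k => ?_
  rw [Function.comp_apply, ← Matrix.map_pow, Matrix.map_map]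
  ext
  simp

theorem nonpos_of_mulVec_nonpos {P B : Matrix ι ι ℝ} (hP : ∀ i j, 0 ≤ P i j)
    (hPB : P * B = 1) {y : ι → ℝ} (hy : ∀ i, (B *ᵥ y) i ≤ 0) (i : ι) : y i ≤ 0 := by
  rw [← one_mulVec y, ← hPB, ← mulVec_mulVec]
  exact sum_nonpos fun j _ => mul_nonpos_of_nonneg_of_nonpos (hP i j) (hy j)

theorem norm_lt_one_of_mem_spectrum_of_inverse_nonneg {T P : Matrix ι ι ℝ}
    (hT : ∀ i j, 0 ≤ T i j) (hP : ∀ i j, 0 ≤ P i j) (hPT : P * (1 - T) = 1) {μ : ℂ}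
    (hμ : μ ∈ spectrum ℂ (T.map (algebraMap ℝ ℂ))) : ‖μ‖ < 1 := by
  obtain ⟨v, hv0, hv⟩ := exists_mulVec_eq_smul_of_mem_spectrum hμ
  by_contra! hμ1
  have hsuper : ∀ i, ((1 - T) *ᵥ fun j => ‖v j‖) i ≤ 0 := fun i => by
    have := norm_mul_norm_le_mulVec_norm hT hv i
    rw [sub_mulVec, one_mulVec, Pi.sub_apply]
    nlinarith [norm_nonneg (v i)]
  exact hv0 (funext fun i => norm_le_zero_iff.mp (nonpos_of_mulVec_nonpos hP hPT hsuper i))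

end Matrix

theorem spectralRadius_le_ofReal_specRad {n : ℕ} (T : Matrix (Fin n) (Fin n) ℝ) :
    spectralRadius ℂ (T.map (algebraMap ℝ ℂ)) ≤ ENNReal.ofReal (specRad T) := by
  refine iSup₂_le fun μ hμ => ?_
  have hbdd := ((Matrix.finite_spectrum (T.map (algebraMap ℝ ℂ))).image fun μ : ℂ => ‖μ‖).bddAbove
  rw [← ENNReal.ofReal_coe_nnreal, coe_nnnorm]
  exact ENNReal.ofReal_le_ofReal (le_csSup hbdd ⟨μ, hμ, rfl⟩)

theorem specRad_lt_of_forall_norm_lt {n : ℕ} {T : Matrix (Fin n) (Fin n) ℝ} {r : ℝ} (hr : 0 < r)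
    (h : ∀ μ ∈ spectrum ℂ (T.map (algebraMap ℝ ℂ)), ‖μ‖ < r) : specRad T < r := by
  rw [specRad]
  set s := (fun μ : ℂ => ‖μ‖) '' spectrum ℂ (T.map (algebraMap ℝ ℂ))
  rcases s.eq_empty_or_nonempty with hs | hs
  · rwa [hs, Real.sSup_empty]
  · obtain ⟨μ, hμ, hμs⟩ := hs.csSup_mem ((Matrix.finite_spectrum _).image _)
    rw [← hμs]
    exact h μ hμ

theorem IsZMatrix.sub {n : ℕ} {M N : Matrix (Fin n) (Fin n) ℝ} (hM : IsZMatrix M)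
    (hN : ∀ i j, 0 ≤ N i j) : IsZMatrix (M - N) :=
  fun i j hij => (sub_le_self _ (hN i j)).trans (hM i j hij)

/-- For an M-splitting `A = M - N`, `ρ(M⁻¹N) < 1` iff `A` is an M-matrix. -/
theorem stmt0 {n : ℕ} (A M N : Matrix (Fin n) (Fin n) ℝ)
    (hsplit : A = M - N) (hM : IsMMatrix M) (hN : ∀ i j, 0 ≤ N i j) :
    specRad (M⁻¹ * N) < 1 ↔ IsMMatrix A := by
  obtain ⟨hMZ, hMdet, hMinv⟩ := hM
  have hT : ∀ i j, 0 ≤ (M⁻¹ * N) i j := mul_apply_nonneg hMinv hN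
  have hfactor : A = M * (1 - M⁻¹ * N) := by
    rw [Matrix.mul_sub, Matrix.mul_one, ← Matrix.mul_assoc, mul_nonsing_inv _ hMdet,
      Matrix.one_mul, hsplit]
  constructor
  · intro hρ
    have hpow : Tendsto ((M⁻¹ * N) ^ ·) atTop (𝓝 0) := tendsto_pow_of_spectralRadius_lt_one
      ((spectralRadius_le_ofReal_specRad _).trans_lt (ENNReal.ofReal_lt_one.mpr hρ))
    refine ⟨hsplit ▸ hMZ.sub hN, ?_, ?_⟩
    · rw [hfactor, det_mul]
      exact hMdet.mul (isUnit_det_one_sub_of_tendsto_pow hpow)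
    · rw [hfactor, Matrix.mul_inv_rev]
      exact mul_apply_nonneg (inv_one_sub_apply_nonneg hT hpow) hMinv
  · rintro ⟨-, hAdet, hAinv⟩
    have hinv : A⁻¹ * M * (1 - M⁻¹ * N) = 1 := by
      rw [Matrix.mul_assoc, ← hfactor, nonsing_inv_mul _ hAdet]
    have hexpand : A⁻¹ * M = 1 + A⁻¹ * N := by
      rw [show M = A + N by rw [hsplit, sub_add_cancel], Matrix.mul_add, nonsing_inv_mul _ hAdet]
    have hnonneg : ∀ i j, 0 ≤ (A⁻¹ * M) i j := fun i j => by
      rw [hexpand, Matrix.add_apply, one_apply]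
      exact add_nonneg (by split_ifs <;> norm_num) (mul_apply_nonneg hAinv hN i j)
    exact specRad_lt_of_forall_norm_lt one_pos fun μ hμ =>
      norm_lt_one_of_mem_spectrum_of_inverse_nonneg hT hnonneg hinv hμ
end

section
/- Let A = (a_ij) be an n×n M-matrix. Then there exists ε₀ > 0 such that for every 0 < ε ≤ ε₀, the matrix A(ε) = (a_ij(ε)) is also an M-matrix, where a_ij(ε) = a_ij if a_ij ≠ 0 and a_ij(ε) = -ε if a_ij = 0 (for off-diagonal entries). -/
/-!
Write `A(ε) = A - ε N`, where `N` is the `0/1` indicator of the zero pattern of `A`. Then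
`A(ε) = A (1 - ε A⁻¹ N)`, and `T = ε A⁻¹ N` is entrywise nonnegative with `‖T‖ < 1` once `ε` is
small. The Neumann series `(1 - T)⁻¹ = ∑ Tᵏ` is then entrywise nonnegative, hence so is
`A(ε)⁻¹ = (1 - T)⁻¹ A⁻¹`; and `A(ε)` stays a Z-matrix since only zero entries change, to `-ε`.
-/

open Matrix BigOperators Finset

namespace Matrix

theorem mul_apply_nonneg_s1 {m n o R : Type*} [Fintype n] [Semiring R] [PartialOrder R]
    [IsOrderedRing R] {A : Matrix m n R} {B : Matrix n o R} (hA : ∀ i j, 0 ≤ A i j)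
    (hB : ∀ i j, 0 ≤ B i j) (i : m) (j : o) : 0 ≤ (A * B) i j :=
  Finset.sum_nonneg fun k _ => mul_nonneg (hA i k) (hB k j)

section NeumannSeries

attribute [local instance] Matrix.linftyOpNormedRing Matrix.linftyOpNormedAlgebra

variable {ι : Type*} [Fintype ι] [DecidableEq ι] {T : Matrix ι ι ℝ}

theorem isUnit_det_one_sub_of_norm_lt_one (hT : ‖T‖ < 1) : IsUnit (1 - T).det :=
  isUnit_det_of_right_inverse (mul_neg_geom_series T hT)

theorem inv_one_sub_apply_nonneg_of_norm_lt_one (hT : ‖T‖ < 1) (hT₀ : ∀ i j, 0 ≤ T i j)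
    (i j : ι) : 0 ≤ (1 - T)⁻¹ i j := by
  have hS : HasSum (fun k : ℕ => T ^ k) (∑' k : ℕ, T ^ k) :=
    (summable_geometric_of_norm_lt_one hT).hasSum
  rw [inv_eq_right_inv (mul_neg_geom_series T hT)]
  exact (Pi.hasSum.1 (Pi.hasSum.1 hS i) j).nonneg fun k => pow_apply_nonneg hT₀ k i j

theorem exists_pos_forall_isUnit_det_sub_smul_and_inv_nonneg {A N : Matrix ι ι ℝ}
    (hA : IsUnit A.det) (hA₀ : ∀ i j, 0 ≤ A⁻¹ i j) (hN : ∀ i j, 0 ≤ N i j) :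
    ∃ ε₀ > (0 : ℝ), ∀ ε : ℝ, 0 ≤ ε → ε ≤ ε₀ →
      IsUnit (A - ε • N).det ∧ ∀ i j, 0 ≤ (A - ε • N)⁻¹ i j := by
  set M := A⁻¹ * N
  refine ⟨(‖M‖ + 1)⁻¹, by positivity, fun ε hε hεε₀ => ?_⟩
  have hnorm : ‖ε • M‖ < 1 := by
    have hM : 0 ≤ ‖M‖ := norm_nonneg M
    calc ‖ε • M‖ = ε * ‖M‖ := by rw [norm_smul, Real.norm_of_nonneg hε]
      _ ≤ (‖M‖ + 1)⁻¹ * ‖M‖ := by gcongr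
      _ < 1 := by rw [inv_mul_lt_iff₀ (by positivity)]; linarith
  have hfactor : A - ε • N = A * (1 - ε • M) := by
    rw [Matrix.mul_sub, mul_one, Matrix.mul_smul, ← Matrix.mul_assoc, mul_nonsing_inv A hA,
      Matrix.one_mul]
  have hT₀ : ∀ i j, 0 ≤ (ε • M) i j := fun i j =>
    mul_nonneg hε (mul_apply_nonneg_s1 hA₀ hN i j)
  have hdet : IsUnit (1 - ε • M).det := isUnit_det_one_sub_of_norm_lt_one hnorm
  refine ⟨?_, ?_⟩
  · rw [hfactor, det_mul]
    exact hA.mul hdet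
  · rw [hfactor, mul_inv_rev]
    exact mul_apply_nonneg_s1 (inv_one_sub_apply_nonneg_of_norm_lt_one hnorm hT₀) hA₀

end NeumannSeries

end Matrix

section ZeroPattern

variable {n : ℕ}

theorem of_ite_eq_zero_eq_sub_smul (A : Matrix (Fin n) (Fin n) ℝ) (ε : ℝ) :
    (of fun i j => if A i j = 0 then -ε else A i j) =
      A - ε • of fun i j => if A i j = 0 then 1 else 0 := by
  ext i j
  by_cases h : A i j = 0 <;> simp [h]

theorem IsZMatrix.of_ite_eq_zero {A : Matrix (Fin n) (Fin n) ℝ} (hA : IsZMatrix A) {ε : ℝ}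
    (hε : 0 ≤ ε) : IsZMatrix (of fun i j => if A i j = 0 then -ε else A i j) := by
  intro i j hij
  by_cases h : A i j = 0
  · simpa [h] using hε
  · simpa [h] using hA i j hij

end ZeroPattern

/-- Perturbing the zero entries of an M-matrix to `-ε` keeps it an
M-matrix for all sufficiently small `ε > 0`. -/
theorem stmt1 {n : ℕ} (A : Matrix (Fin n) (Fin n) ℝ) (hA : IsMMatrix A) :
    ∃ ε₀ > (0 : ℝ), ∀ ε : ℝ, 0 < ε → ε ≤ ε₀ →
      IsMMatrix (Matrix.of fun i j => if A i j = 0 then -ε else A i j) := by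
  obtain ⟨hZ, hdet, hinv⟩ := hA
  have hN : ∀ i j, 0 ≤ (of fun i j => if A i j = 0 then (1 : ℝ) else 0) i j := by
    intro i j
    by_cases h : A i j = 0 <;> simp [h]
  obtain ⟨ε₀, hε₀, hsmall⟩ :=
    exists_pos_forall_isUnit_det_sub_smul_and_inv_nonneg hdet hinv hN
  refine ⟨ε₀, hε₀, fun ε hε hεε₀ => ⟨hZ.of_ite_eq_zero hε.le, ?_⟩⟩
  rw [of_ite_eq_zero_eq_sub_smul]
  exact hsmall ε hε.le hεε₀
end

section
/- Let D̃ be a diagonal matrix with positive diagonal, L̃, Ũ ≥ 0 strictly lower/upper triangular, and 0 ≤ γ ≤ ω ≤ 1 with ω ≠ 0, γ < 1. If D̃ - L̃ - Ũ is irreducible, then the AOR iteration matrix L̃_{γ,ω} = (D̃ - γL̃)⁻¹[(1-ω)D̃ + (ω-γ)L̃ + ωŨ] is nonnegative; moreover L̃_{γ,ω} ≥ (1-ω)I + (ω-γ)D̃⁻¹L̃ + ωD̃⁻¹Ũ entrywise. -/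
open Matrix BigOperators Finset

/-- The AOR iteration matrix built from `D̃ - L̃ - Ũ` is nonnegative
and dominates `(1-ω)I + (ω-γ)D̃⁻¹L̃ + ωD̃⁻¹Ũ` entrywise. -/
theorem stmt12 {n : ℕ} (D L U : Matrix (Fin n) (Fin n) ℝ)
    (hDdiag : ∀ i j, i ≠ j → D i j = 0) (hDpos : ∀ i, 0 < D i i)
    (hL0 : ∀ i j, 0 ≤ L i j) (hLlow : ∀ i j : Fin n, ¬((j : ℕ) < (i : ℕ)) → L i j = 0)
    (hU0 : ∀ i j, 0 ≤ U i j) (hUup : ∀ i j : Fin n, ¬((i : ℕ) < (j : ℕ)) → U i j = 0)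
    (γ ω : ℝ) (h0γ : 0 ≤ γ) (hγω : γ ≤ ω) (hω1 : ω ≤ 1) (hω : ω ≠ 0) (hγ1 : γ < 1)
    (hirr : IsIrreducibleMat (D - L - U)) :
    (∀ i j, 0 ≤ ((D - γ • L)⁻¹ *
        ((1 - ω) • D + (ω - γ) • L + ω • U)) i j) ∧
      ∀ i j, ((1 - ω) • (1 : Matrix (Fin n) (Fin n) ℝ)
          + (ω - γ) • (D⁻¹ * L) + ω • (D⁻¹ * U)) i j ≤
        ((D - γ • L)⁻¹ * ((1 - ω) • D + (ω - γ) • L + ω • U)) i j := by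
  classical
  by_cases hn : n = 0
  · subst hn
    exact ⟨fun i => i.elim0, fun i => i.elim0⟩
  set d : Fin n → ℝ := fun i => D i i with hd
  have hdne : ∀ i, d i ≠ 0 := fun i => (hDpos i).ne'
  have hDdiag' : D = Matrix.diagonal d := by
    ext i j
    by_cases h : i = j
    · subst h; rw [Matrix.diagonal_apply_eq]
    · simp [Matrix.diagonal, h, hDdiag i j h]
  have hDinv : D⁻¹ = Matrix.diagonal (fun i => (d i)⁻¹) := by
    apply Matrix.inv_eq_right_inv
    conv_lhs => rw [hDdiag']
    rw [Matrix.diagonal_mul_diagonal,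
      show (fun i => d i * (d i)⁻¹) = fun _ => (1 : ℝ) from
        funext fun i => mul_inv_cancel₀ (hdne i), Matrix.diagonal_one]
  have hDinvD : D⁻¹ * D = 1 := by
    rw [hDinv]
    conv_lhs => rw [hDdiag']
    rw [Matrix.diagonal_mul_diagonal,
      show (fun i => (d i)⁻¹ * d i) = fun _ => (1 : ℝ) from
        funext fun i => inv_mul_cancel₀ (hdne i), Matrix.diagonal_one]
  have hDDinv : D * D⁻¹ = 1 := by
    rw [hDinv]
    conv_lhs => rw [hDdiag']
    rw [Matrix.diagonal_mul_diagonal,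
      show (fun i => d i * (d i)⁻¹) = fun _ => (1 : ℝ) from
        funext fun i => mul_inv_cancel₀ (hdne i), Matrix.diagonal_one]
  have hDLentry : ∀ i j, (D⁻¹ * L) i j = (d i)⁻¹ * L i j := by
    intro i j; rw [hDinv, Matrix.diagonal_mul]
  have hDUentry : ∀ i j, (D⁻¹ * U) i j = (d i)⁻¹ * U i j := by
    intro i j; rw [hDinv, Matrix.diagonal_mul]
  set N : Matrix (Fin n) (Fin n) ℝ := γ • (D⁻¹ * L) with hN
  have hNentry : ∀ i j, N i j = γ * ((d i)⁻¹ * L i j) := by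
    intro i j
    rw [hN, Matrix.smul_apply, hDLentry, smul_eq_mul]
  have hN0 : ∀ i j, 0 ≤ N i j := fun i j => by
    rw [hNentry]
    exact mul_nonneg h0γ (mul_nonneg (inv_nonneg.2 (hDpos i).le) (hL0 i j))
  have hNlow : ∀ i j : Fin n, ¬((j : ℕ) < (i : ℕ)) → N i j = 0 := by
    intro i j h; rw [hNentry, hLlow i j h]; ring
  -- nilpotency
  have hpow : ∀ k, ∀ i j : Fin n, (i : ℕ) < (j : ℕ) + k → (N ^ k) i j = 0 := by
    intro k
    induction k with
    | zero =>
      intro i j h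
      have hij : i ≠ j := by
        intro he; subst he; omega
      simp [Matrix.one_apply_ne hij]
    | succ k ih =>
      intro i j h
      rw [pow_succ', Matrix.mul_apply]
      refine Finset.sum_eq_zero fun l _ => ?_
      by_cases hl : (l : ℕ) < (i : ℕ)
      · rw [ih l j (by omega), mul_zero]
      · rw [hNlow i l hl, zero_mul]
  have hNn : N ^ n = 0 := by
    ext i j
    rw [hpow n i j (by omega)]
    rfl
  set S : Matrix (Fin n) (Fin n) ℝ := ∑ k ∈ Finset.range n, N ^ k with hS
  have hSleft : (1 - N) * S = 1 := by
    have h := mul_geom_sum N n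
    rw [hNn, zero_sub] at h
    rw [← neg_sub N 1, neg_mul, hS, h, neg_neg]
  have hSright : S * (1 - N) = 1 := by
    have h := geom_sum_mul N n
    rw [hNn, zero_sub] at h
    rw [← neg_sub N 1, mul_neg, hS, h, neg_neg]
  have hSinv : (1 - N)⁻¹ = S := Matrix.inv_eq_right_inv hSleft
  have hfac : D - γ • L = D * (1 - N) := by
    rw [mul_sub, mul_one, hN, Matrix.mul_smul, ← Matrix.mul_assoc, hDDinv, one_mul]
  set B : Matrix (Fin n) (Fin n) ℝ :=
    (1 - ω) • (1 : Matrix (Fin n) (Fin n) ℝ) + (ω - γ) • (D⁻¹ * L) + ω • (D⁻¹ * U) with hB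
  have hDinvR : D⁻¹ * ((1 - ω) • D + (ω - γ) • L + ω • U) = B := by
    rw [mul_add, mul_add, Matrix.mul_smul, Matrix.mul_smul, Matrix.mul_smul, hDinvD, hB]
  have hfull : (D - γ • L)⁻¹ * ((1 - ω) • D + (ω - γ) • L + ω • U) = S * B := by
    rw [hfac, Matrix.mul_inv_rev, hSinv, Matrix.mul_assoc, hDinvR]
  -- nonnegativity facts
  have hω0 : 0 ≤ ω := le_trans h0γ hγω
  have hB0 : ∀ i j, 0 ≤ B i j := by
    intro i j
    rw [hB]
    simp only [Matrix.add_apply, Matrix.smul_apply, smul_eq_mul]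
    have h1 : 0 ≤ (1 : Matrix (Fin n) (Fin n) ℝ) i j := by
      rw [Matrix.one_apply]; positivity
    have h2 : 0 ≤ (D⁻¹ * L) i j := by
      rw [hDLentry]
      exact mul_nonneg (inv_nonneg.2 (hDpos i).le) (hL0 i j)
    have h3 : 0 ≤ (D⁻¹ * U) i j := by
      rw [hDUentry]
      exact mul_nonneg (inv_nonneg.2 (hDpos i).le) (hU0 i j)
    have := sub_nonneg.2 hω1
    have := sub_nonneg.2 hγω
    positivity
  have hmulnn : ∀ A C : Matrix (Fin n) (Fin n) ℝ, (∀ i j, 0 ≤ A i j) →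
      (∀ i j, 0 ≤ C i j) → ∀ i j, 0 ≤ (A * C) i j := by
    intro A C hA hC i j
    rw [Matrix.mul_apply]
    exact Finset.sum_nonneg fun l _ => mul_nonneg (hA i l) (hC l j)
  have hpow0 : ∀ k, ∀ i j, 0 ≤ (N ^ k) i j := by
    intro k
    induction k with
    | zero =>
      intro i j
      rw [pow_zero, Matrix.one_apply]; positivity
    | succ k ih =>
      intro i j
      rw [pow_succ]
      exact hmulnn _ _ ih hN0 i j
  -- split S = 1 + T
  have h0mem : 0 ∈ Finset.range n := by
    simp [Nat.pos_of_ne_zero hn]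
  set T : Matrix (Fin n) (Fin n) ℝ := ∑ k ∈ (Finset.range n).erase 0, N ^ k with hT
  have hSsplit : S = 1 + T := by
    rw [hS, ← Finset.add_sum_erase _ _ h0mem, pow_zero, hT]
  have hT0 : ∀ i j, 0 ≤ T i j := by
    intro i j
    rw [hT, Matrix.sum_apply]
    exact Finset.sum_nonneg fun k _ => hpow0 k i j
  have hTB0 : ∀ i j, 0 ≤ (T * B) i j := hmulnn T B hT0 hB0
  have hSB : S * B = B + T * B := by
    rw [hSsplit, add_mul, one_mul]
  constructor
  · intro i j
    rw [hfull, hSB, Matrix.add_apply]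
    exact add_nonneg (hB0 i j) (hTB0 i j)
  · intro i j
    rw [hfull, hSB, Matrix.add_apply]
    exact le_add_of_nonneg_right (hTB0 i j)
end

section
/- Let B be a nonnegative irreducible n×n matrix. Then B has a positive Perron vector: there exists x ≫ 0 with Bx = ρ(B)x. -/
open Matrix BigOperators Finset

section PFAux
variable {n : ℕ} (B : Matrix (Fin n) (Fin n) ℝ)



/-- step map -/
noncomputable def pfStep (v : Fin n → ℝ) : Fin n → ℝ := v + B.mulVec v

lemma pfStep_nonneg (hB : ∀ i j, 0 ≤ B i j) {v : Fin n → ℝ} (hv : ∀ i, 0 ≤ v i) :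
    ∀ i, 0 ≤ pfStep B v i := by
  intro i
  have : 0 ≤ B.mulVec v i := by
    simp only [Matrix.mulVec, dotProduct]
    exact Finset.sum_nonneg fun j _ => mul_nonneg (hB i j) (hv j)
  simpa [pfStep] using add_nonneg (hv i) this

lemma mulVec_nonneg (hB : ∀ i j, 0 ≤ B i j) {v : Fin n → ℝ} (hv : ∀ i, 0 ≤ v i) :
    ∀ i, 0 ≤ B.mulVec v i := by
  intro i
  simp only [Matrix.mulVec, dotProduct]
  exact Finset.sum_nonneg fun j _ => mul_nonneg (hB i j) (hv j)

lemma pfStep_pos (hB : ∀ i j, 0 ≤ B i j) {v : Fin n → ℝ} (hv : ∀ i, 0 < v i) :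
    ∀ i, 0 < pfStep B v i := by
  intro i
  have h := mulVec_nonneg B hB (fun i => (hv i).le) i
  simpa [pfStep] using add_pos_of_pos_of_nonneg (hv i) h

lemma pfIter_nonneg (hB : ∀ i j, 0 ≤ B i j) {v : Fin n → ℝ} (hv : ∀ i, 0 ≤ v i) (m : ℕ) :
    ∀ i, 0 ≤ (pfStep B)^[m] v i := by
  induction m generalizing v with
  | zero => simpa using hv
  | succ m ih =>
    rw [Function.iterate_succ_apply]
    exact ih (pfStep_nonneg B hB hv)

lemma pfIter_pos (hB : ∀ i j, 0 ≤ B i j) {v : Fin n → ℝ} (hv : ∀ i, 0 < v i) (m : ℕ) :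
    ∀ i, 0 < (pfStep B)^[m] v i := by
  induction m generalizing v with
  | zero => simpa using hv
  | succ m ih =>
    rw [Function.iterate_succ_apply]
    exact ih (pfStep_pos B hB hv)

lemma pfIter_mulVec (v : Fin n → ℝ) (m : ℕ) :
    B.mulVec ((pfStep B)^[m] v) = (pfStep B)^[m] (B.mulVec v) := by
  induction m generalizing v with
  | zero => simp
  | succ m ih =>
    rw [Function.iterate_succ_apply, Function.iterate_succ_apply, ih]
    congr 1
    simp [pfStep, Matrix.mulVec_add]

lemma pfIter_sub (u v : Fin n → ℝ) (m : ℕ) :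
    (pfStep B)^[m] (u - v) = (pfStep B)^[m] u - (pfStep B)^[m] v := by
  induction m generalizing u v with
  | zero => simp
  | succ m ih =>
    rw [Function.iterate_succ_apply, Function.iterate_succ_apply,
      Function.iterate_succ_apply]
    rw [show pfStep B (u - v) = pfStep B u - pfStep B v by
      funext i; simp [pfStep, Matrix.mulVec_sub]; abel]
    exact ih _ _

lemma pfIter_smul (c : ℝ) (v : Fin n → ℝ) (m : ℕ) :
    (pfStep B)^[m] (c • v) = c • (pfStep B)^[m] v := by
  induction m generalizing v with
  | zero => simp
  | succ m ih =>
    rw [Function.iterate_succ_apply, Function.iterate_succ_apply]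
    rw [show pfStep B (c • v) = c • pfStep B v by
      funext i; simp [pfStep, Matrix.mulVec_smul, smul_add, mul_add]]
    exact ih _



/-- If u ≥ 0 has nonempty, non-full support, some zero coordinate gets positive mass. -/
lemma supp_grow (hB : ∀ i j, 0 ≤ B i j) (hirr : IsIrreducibleMat B)
    {u : Fin n → ℝ} (hu : ∀ i, 0 ≤ u i) (hne : ∃ j, u j ≠ 0) (hz : ∃ i, u i = 0) :
    ∃ i, u i = 0 ∧ 0 < B.mulVec u i := by
  obtain ⟨j0, hj0⟩ := hne
  obtain ⟨i0, hi0⟩ := hz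
  by_contra hcon
  push_neg at hcon
  -- each zero coordinate has (Bu) i = 0
  have key : ∀ i, u i = 0 → ∀ j, B i j * u j = 0 := by
    intro i hi j
    have h1 : B.mulVec u i = 0 := by
      have h2 := hcon i hi
      have h3 : 0 ≤ B.mulVec u i := by
        simp only [Matrix.mulVec, dotProduct]
        exact Finset.sum_nonneg fun j _ => mul_nonneg (hB i j) (hu j)
      linarith
    have h4 : ∑ k, B i k * u k = 0 := by
      simpa [Matrix.mulVec, dotProduct] using h1
    have := (Finset.sum_eq_zero_iff_of_nonneg
      (fun k _ => mul_nonneg (hB i k) (hu k))).mp h4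
    exact this j (Finset.mem_univ j)
  -- everything reachable from i0 has u = 0
  have reach : ∀ k, Relation.ReflTransGen (fun a b => B a b ≠ 0) i0 k → u k = 0 := by
    intro k h
    induction h with
    | refl => exact hi0
    | tail _ hedge ih =>
      rename_i b c _
      have := key b ih c
      rcases mul_eq_zero.mp this with h | h
      · exact absurd h hedge
      · exact h
  exact hj0 (reach j0 (hirr i0 j0))

/-- Eventual positivity of the iterates of `v ↦ v + Bv`. -/
lemma exists_iter_pos (hB : ∀ i j, 0 ≤ B i j) (hirr : IsIrreducibleMat B)
    {u : Fin n → ℝ} (hu : ∀ i, 0 ≤ u i) (hne : ∃ j, u j ≠ 0) :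
    ∃ m, ∀ i, 0 < (pfStep B)^[m] u i := by
  -- strong induction on the number of zero coordinates
  obtain ⟨k, hk⟩ : ∃ k, (Finset.univ.filter (fun i => u i = 0)).card = k := ⟨_, rfl⟩
  induction k using Nat.strong_induction_on generalizing u with
  | _ k ih =>
    by_cases hall : ∀ i, 0 < u i
    · exact ⟨0, by simpa using hall⟩
    · push_neg at hall
      obtain ⟨i1, hi1⟩ := hall
      have hi1 : u i1 = 0 := le_antisymm hi1 (hu i1)
      obtain ⟨i, hiz, hipos⟩ := supp_grow B hB hirr hu hne ⟨i1, hi1⟩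
      set u' := pfStep B u with hu'
      have hu'nonneg : ∀ i, 0 ≤ u' i := pfStep_nonneg B hB hu
      have hsub : (Finset.univ.filter (fun i => u' i = 0)) ⊂
          (Finset.univ.filter (fun i => u i = 0)) := by
        constructor
        · intro j hj
          simp only [Finset.mem_filter, Finset.mem_univ, true_and] at hj ⊢
          have h1 : 0 ≤ B.mulVec u j := mulVec_nonneg B hB hu j
          have : u j + B.mulVec u j = 0 := hj
          linarith [hu j]
        · intro hsup
          have hmem : i ∈ Finset.univ.filter (fun i => u i = 0) := by
            simp [hiz]
          have := hsup hmem
          simp only [Finset.mem_filter, Finset.mem_univ, true_and] at this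
          have : u i + B.mulVec u i = 0 := this
          linarith
      have hcard : (Finset.univ.filter (fun i => u' i = 0)).card < k := by
        rw [← hk]; exact Finset.card_lt_card hsub
      have hne' : ∃ j, u' j ≠ 0 := ⟨i, by
        have : u' i = u i + B.mulVec u i := rfl
        rw [this, hiz, zero_add]; exact ne_of_gt hipos⟩
      obtain ⟨m, hm⟩ := ih _ hcard hu'nonneg hne' rfl
      exact ⟨m + 1, by
        intro j
        rw [Function.iterate_succ_apply]
        exact hm j⟩

lemma sum_pos_of_ne {v : Fin n → ℝ} (hv : ∀ i, 0 ≤ v i) (hne : ∃ j, v j ≠ 0) :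
    0 < ∑ i, v i := by
  obtain ⟨j, hj⟩ := hne
  have : 0 < v j := lt_of_le_of_ne (hv j) (Ne.symm hj)
  exact Finset.sum_pos' (fun i _ => hv i) ⟨j, Finset.mem_univ j, this⟩

/-- Real Perron-Frobenius core: a maximal Collatz-Wielandt value with positive eigenvector. -/
lemma pf_real (hn : 0 < n) (hB : ∀ i j, 0 ≤ B i j) (hirr : IsIrreducibleMat B) :
    ∃ r : ℝ, 0 ≤ r ∧ (∃ x : Fin n → ℝ, (∀ i, 0 < x i) ∧ B.mulVec x = r • x) ∧
      ∀ (t : ℝ) (y : Fin n → ℝ), 0 ≤ t → (∀ i, 0 ≤ y i) → (∃ j, y j ≠ 0) →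
        (∀ i, t * y i ≤ B.mulVec y i) → t ≤ r := by
  haveI : NeZero n := ⟨hn.ne'⟩
  set K : Set (Fin n → ℝ) := {x | (∀ i, 0 ≤ x i) ∧ ∑ i, x i = 1} with hK
  set E : Set (ℝ × (Fin n → ℝ)) :=
    {p | 0 ≤ p.1 ∧ p.2 ∈ K ∧ ∀ i, p.1 * p.2 i ≤ B.mulVec p.2 i} with hE
  set C : ℝ := ∑ i, ∑ j, B i j with hC
  -- bound on the first coordinate
  have htb : ∀ p ∈ E, p.1 ≤ C := by
    rintro ⟨t, x⟩ ⟨ht, ⟨hx, hsum⟩, hcw⟩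
    have hx1 : ∀ j, x j ≤ 1 := by
      intro j
      calc x j ≤ ∑ i, x i := Finset.single_le_sum (fun i _ => hx i) (Finset.mem_univ j)
        _ = 1 := hsum
    calc t = ∑ i, t * x i := by rw [← Finset.mul_sum, hsum, mul_one]
      _ ≤ ∑ i, B.mulVec x i := Finset.sum_le_sum fun i _ => hcw i
      _ = ∑ i, ∑ j, B i j * x j := by simp [Matrix.mulVec, dotProduct]
      _ ≤ ∑ i, ∑ j, B i j := by
          refine Finset.sum_le_sum fun i _ => Finset.sum_le_sum fun j _ => ?_
          calc B i j * x j ≤ B i j * 1 := by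
                exact mul_le_mul_of_nonneg_left (hx1 j) (hB i j)
            _ = B i j := mul_one _
  have hCnn : 0 ≤ C :=
    Finset.sum_nonneg fun i _ => Finset.sum_nonneg fun j _ => hB i j
  -- E is nonempty
  have hEne : E.Nonempty := by
    refine ⟨(0, fun _ => (n : ℝ)⁻¹), le_refl 0, ⟨fun i => by positivity, ?_⟩, fun i => ?_⟩
    · show ∑ _i : Fin n, (n : ℝ)⁻¹ = 1
      rw [Finset.sum_const, Finset.card_univ, Fintype.card_fin, nsmul_eq_mul]
      field_simp
    · rw [zero_mul]
      exact mulVec_nonneg B hB (fun i => by positivity) i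
  -- E is closed
  have hclosed : IsClosed E := by
    have h1 : IsClosed {p : ℝ × (Fin n → ℝ) | 0 ≤ p.1} :=
      isClosed_le continuous_const continuous_fst
    have h2 : IsClosed {p : ℝ × (Fin n → ℝ) | ∀ i, 0 ≤ p.2 i} := by
      rw [Set.setOf_forall]
      exact isClosed_iInter fun i =>
        isClosed_le continuous_const ((continuous_apply i).comp continuous_snd)
    have h3 : IsClosed {p : ℝ × (Fin n → ℝ) | ∑ i, p.2 i = 1} :=
      isClosed_eq (continuous_finset_sum _ fun i _ =>
        (continuous_apply i).comp continuous_snd) continuous_const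
    have h4 : IsClosed {p : ℝ × (Fin n → ℝ) | ∀ i, p.1 * p.2 i ≤ B.mulVec p.2 i} := by
      have heq : {p : ℝ × (Fin n → ℝ) | ∀ i, p.1 * p.2 i ≤ B.mulVec p.2 i} =
          {p : ℝ × (Fin n → ℝ) | ∀ i, p.1 * p.2 i ≤ ∑ j, B i j * p.2 j} := by
        simp [Matrix.mulVec, dotProduct]
      rw [heq, Set.setOf_forall]
      exact isClosed_iInter fun i =>
        isClosed_le (continuous_fst.mul ((continuous_apply i).comp continuous_snd))
          (continuous_finset_sum _ fun j _ =>
            (continuous_const.mul ((continuous_apply j).comp continuous_snd)))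
    have heq : E = {p : ℝ × (Fin n → ℝ) | 0 ≤ p.1} ∩
        ({p | ∀ i, 0 ≤ p.2 i} ∩ ({p | ∑ i, p.2 i = 1} ∩
          {p | ∀ i, p.1 * p.2 i ≤ B.mulVec p.2 i})) := by
      ext p
      simp only [hE, hK, Set.mem_setOf_eq, Set.mem_inter_iff]
      tauto
    rw [heq]
    exact h1.inter (h2.inter (h3.inter h4))
  -- E is bounded
  have hbdd : Bornology.IsBounded E := by
    refine (Metric.isBounded_closedBall (x := (0 : ℝ × (Fin n → ℝ))) (r := C + 1)).subset ?_
    rintro ⟨t, x⟩ hp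
    have hp' := hp
    obtain ⟨ht, ⟨hx, hsum⟩, _⟩ := hp'
    have hx1 : ∀ j, x j ≤ 1 := by
      intro j
      calc x j ≤ ∑ i, x i := Finset.single_le_sum (fun i _ => hx i) (Finset.mem_univ j)
        _ = 1 := hsum
    simp only [Metric.mem_closedBall, dist_zero_right]
    rw [Prod.norm_def]
    apply max_le
    · rw [Real.norm_eq_abs, abs_of_nonneg ht]
      linarith [htb (t, x) hp]
    · refine (pi_norm_le_iff_of_nonneg (show (0:ℝ) ≤ C + 1 by linarith)).mpr fun i => ?_
      rw [Real.norm_eq_abs, abs_of_nonneg (hx i)]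
      linarith [hx1 i]
  have hcompact : IsCompact E := Metric.isCompact_of_isClosed_isBounded hclosed hbdd
  obtain ⟨p, hpE, hpmax⟩ := hcompact.exists_isMaxOn hEne continuous_fst.continuousOn
  obtain ⟨hr0, ⟨hxnn, hxsum⟩, hcw⟩ := hpE
  set r : ℝ := p.1 with hrdef
  set x : Fin n → ℝ := p.2 with hxdef
  -- the Collatz-Wielandt upper bound
  have hmax : ∀ (t : ℝ) (y : Fin n → ℝ), 0 ≤ t → (∀ i, 0 ≤ y i) → (∃ j, y j ≠ 0) →
      (∀ i, t * y i ≤ B.mulVec y i) → t ≤ r := by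
    intro t y ht hy hyne hcwy
    have hs : 0 < ∑ i, y i := sum_pos_of_ne hy hyne
    set s : ℝ := ∑ i, y i
    have hmem : (t, s⁻¹ • y) ∈ E := by
      refine ⟨ht, ⟨fun i => mul_nonneg (inv_nonneg.mpr hs.le) (hy i), ?_⟩, fun i => ?_⟩
      · show ∑ i, (s⁻¹ • y) i = 1
        simp only [Pi.smul_apply, smul_eq_mul]
        rw [← Finset.mul_sum]
        exact inv_mul_cancel₀ hs.ne'
      · show t * (s⁻¹ • y) i ≤ B.mulVec (s⁻¹ • y) i
        rw [Matrix.mulVec_smul]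
        simp only [Pi.smul_apply, smul_eq_mul]
        rw [mul_comm t (s⁻¹ * y i), mul_assoc, mul_comm (y i) t]
        exact mul_le_mul_of_nonneg_left (hcwy i) (inv_nonneg.mpr hs.le)
    exact hpmax hmem
  refine ⟨r, hr0, ?_, hmax⟩
  have hxne : ∃ j, x j ≠ 0 := by
    by_contra h
    push_neg at h
    rw [Finset.sum_eq_zero (fun i _ => h i)] at hxsum
    norm_num at hxsum
  -- first: B x = r • x
  have heig : B.mulVec x = r • x := by
    by_contra hne
    set y : Fin n → ℝ := B.mulVec x - r • x with hy
    have hynn : ∀ i, 0 ≤ y i := by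
      intro i
      simp only [hy, Pi.sub_apply, Pi.smul_apply, smul_eq_mul, sub_nonneg]
      exact hcw i
    have hyne : ∃ j, y j ≠ 0 := by
      by_contra h
      push_neg at h
      apply hne
      have : y = 0 := funext h
      rw [hy, sub_eq_zero] at this
      exact this
    obtain ⟨m1, hm1⟩ := exists_iter_pos B hB hirr hxnn hxne
    obtain ⟨m2, hm2⟩ := exists_iter_pos B hB hirr hynn hyne
    set m := m1 + m2 with hm
    set z : Fin n → ℝ := (pfStep B)^[m] x with hz
    set w : Fin n → ℝ := (pfStep B)^[m] y with hw
    have hzpos : ∀ i, 0 < z i := by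
      have : z = (pfStep B)^[m2] ((pfStep B)^[m1] x) := by
        rw [hz, hm, add_comm, Function.iterate_add_apply]
      rw [this]
      exact pfIter_pos B hB hm1 m2
    have hwpos : ∀ i, 0 < w i := by
      have : w = (pfStep B)^[m1] ((pfStep B)^[m2] y) := by
        rw [hw, hm, Function.iterate_add_apply]
      rw [this]
      exact pfIter_pos B hB hm2 m1
    have hkey : B.mulVec z - r • z = w := by
      rw [hz, hw, hy, pfIter_sub, pfIter_mulVec, pfIter_smul]
    -- improve r
    have hne' : Nonempty (Fin n) := ⟨⟨0, hn⟩⟩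
    set δ : ℝ := Finset.univ.inf' Finset.univ_nonempty (fun i => w i / z i) with hδ
    have hδpos : 0 < δ := by
      rw [hδ]
      apply Finset.lt_inf'_iff _ |>.mpr
      intro i _
      exact div_pos (hwpos i) (hzpos i)
    have himp : ∀ i, (r + δ) * z i ≤ B.mulVec z i := by
      intro i
      have h1 : δ ≤ w i / z i := Finset.inf'_le _ (Finset.mem_univ i)
      have h2 : δ * z i ≤ w i := by
        rw [← div_mul_cancel₀ (w i) (ne_of_gt (hzpos i))]
        exact mul_le_mul_of_nonneg_right h1 (hzpos i).le
      have h3 : B.mulVec z i = r * z i + w i := by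
        have := congrFun hkey i
        simp only [Pi.sub_apply, Pi.smul_apply, smul_eq_mul] at this
        linarith
      rw [h3]
      ring_nf
      nlinarith [hzpos i]
    have := hmax (r + δ) z (by linarith) (fun i => (hzpos i).le)
      ⟨⟨0, hn⟩, ne_of_gt (hzpos ⟨0, hn⟩)⟩ himp
    linarith
  -- positivity of x
  obtain ⟨m, hm⟩ := exists_iter_pos B hB hirr hxnn hxne
  have hiter : ∀ k, (pfStep B)^[k] x = (1 + r) ^ k • x := by
    intro k
    induction k with
    | zero => simp
    | succ k ih =>
      rw [Function.iterate_succ_apply', ih]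
      have : pfStep B ((1 + r) ^ k • x) = (1 + r) ^ k • pfStep B x := by
        funext i
        simp [pfStep, Matrix.mulVec_smul, mul_add]
      rw [this]
      have : pfStep B x = (1 + r) • x := by
        funext i
        simp [pfStep, heig, add_mul]
      rw [this, smul_smul, pow_succ]
  refine ⟨x, fun i => ?_, heig⟩
  have h1 := hm i
  rw [hiter m] at h1
  simp only [Pi.smul_apply, smul_eq_mul] at h1
  have h2 : (0:ℝ) < (1 + r) ^ m := pow_pos (by linarith) m
  nlinarith

lemma mem_spectrum_of_eigen {M : Matrix (Fin n) (Fin n) ℂ} {μ : ℂ} {v : Fin n → ℂ}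
    (hv : v ≠ 0) (h : M.mulVec v = μ • v) : μ ∈ spectrum ℂ M := by
  rw [spectrum.mem_iff]
  intro hunit
  have hdet : ((algebraMap ℂ (Matrix (Fin n) (Fin n) ℂ)) μ - M).det ≠ 0 := by
    have := (Matrix.isUnit_iff_isUnit_det _).mp hunit
    exact IsUnit.ne_zero this
  apply hdet
  rw [← Matrix.exists_mulVec_eq_zero_iff]
  refine ⟨v, hv, ?_⟩
  rw [Matrix.sub_mulVec, Algebra.algebraMap_eq_smul_one, Matrix.smul_mulVec,
    Matrix.one_mulVec, h, sub_self]

lemma eigen_of_mem_spectrum {M : Matrix (Fin n) (Fin n) ℂ} {μ : ℂ}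
    (h : μ ∈ spectrum ℂ M) : ∃ v : Fin n → ℂ, v ≠ 0 ∧ M.mulVec v = μ • v := by
  rw [spectrum.mem_iff] at h
  have hdet : ((algebraMap ℂ (Matrix (Fin n) (Fin n) ℂ)) μ - M).det = 0 := by
    by_contra hd
    exact h ((Matrix.isUnit_iff_isUnit_det _).mpr (isUnit_iff_ne_zero.mpr hd))
  obtain ⟨v, hv, hveq⟩ := (Matrix.exists_mulVec_eq_zero_iff).mpr hdet
  refine ⟨v, hv, ?_⟩
  rw [Matrix.sub_mulVec, Algebra.algebraMap_eq_smul_one, Matrix.smul_mulVec,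
    Matrix.one_mulVec, sub_eq_zero] at hveq
  exact hveq.symm

lemma spectrum_nonempty_matrix (hn : 0 < n) (M : Matrix (Fin n) (Fin n) ℂ) :
    (spectrum ℂ M).Nonempty := by
  haveI : NeZero n := ⟨hn.ne'⟩
  obtain ⟨μ, hμ⟩ := Module.End.exists_eigenvalue (Matrix.toLin' M)
  obtain ⟨v, hv⟩ := hμ.exists_hasEigenvector
  refine ⟨μ, mem_spectrum_of_eigen hv.2 ?_⟩
  have := hv.apply_eq_smul
  rwa [Matrix.toLin'_apply] at this


end PFAux

/-- Perron–Frobenius: a nonnegative irreducible matrix has a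
strictly positive eigenvector for the eigenvalue `ρ(B)`. -/
theorem stmt18 {n : ℕ} (B : Matrix (Fin n) (Fin n) ℝ)
    (hB : ∀ i j, 0 ≤ B i j) (hirr : IsIrreducibleMat B) :
    ∃ x : Fin n → ℝ, (∀ i, 0 < x i) ∧ B.mulVec x = specRad B • x := by
  rcases Nat.eq_zero_or_pos n with h0 | hn
  · subst h0
    exact ⟨fun i => 1, fun i => i.elim0, funext fun i => i.elim0⟩
  obtain ⟨r, hr0, ⟨x, hxpos, heig⟩, hmax⟩ := pf_real B hn hB hirr
  set M : Matrix (Fin n) (Fin n) ℂ := B.map (algebraMap ℝ ℂ) with hM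
  -- r is in the spectrum of M
  have hrspec : (r : ℂ) ∈ spectrum ℂ M := by
    set v : Fin n → ℂ := fun i => (x i : ℂ) with hv
    have hvne : v ≠ 0 := by
      intro h
      have := congrFun h ⟨0, hn⟩
      simp only [hv, Pi.zero_apply, Complex.ofReal_eq_zero] at this
      exact (hxpos ⟨0, hn⟩).ne' this
    refine mem_spectrum_of_eigen hvne ?_
    funext i
    have hre := congrFun heig i
    simp only [Matrix.mulVec, dotProduct, Pi.smul_apply, smul_eq_mul] at hre ⊢
    simp only [hM, Matrix.map_apply, hv, Complex.coe_algebraMap]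
    rw [← Complex.ofReal_mul]
    rw [show ∑ j, (B i j : ℂ) * (x j : ℂ) = ((∑ j, B i j * x j : ℝ) : ℂ) by push_cast; rfl]
    exact_mod_cast congrArg (fun t : ℝ => (t : ℂ)) hre
  -- every spectral value has norm at most r
  have hbound : ∀ μ ∈ spectrum ℂ M, ‖μ‖ ≤ r := by
    intro μ hμ
    obtain ⟨v, hvne, hveq⟩ := eigen_of_mem_spectrum hμ
    set w : Fin n → ℝ := fun i => ‖v i‖ with hw
    have hwnn : ∀ i, 0 ≤ w i := fun i => norm_nonneg _
    have hwne : ∃ j, w j ≠ 0 := by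
      obtain ⟨j, hj⟩ := Function.ne_iff.mp hvne
      exact ⟨j, by simp [hw, norm_eq_zero]; simpa using hj⟩
    have hwcw : ∀ i, ‖μ‖ * w i ≤ B.mulVec w i := by
      intro i
      have h1 : μ * v i = ∑ j, M i j * v j := by
        have := congrFun hveq i
        simp only [Matrix.mulVec, dotProduct, Pi.smul_apply, smul_eq_mul] at this
        rw [this]
      calc ‖μ‖ * w i = ‖μ * v i‖ := by rw [norm_mul]
        _ = ‖∑ j, M i j * v j‖ := by rw [h1]
        _ ≤ ∑ j, ‖M i j * v j‖ := norm_sum_le _ _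
        _ = ∑ j, B i j * w j := by
            refine Finset.sum_congr rfl fun j _ => ?_
            rw [norm_mul]
            simp only [hM, Matrix.map_apply]
            congr 1
            simp [Complex.norm_real, abs_of_nonneg (hB i j)]
        _ = B.mulVec w i := by simp [Matrix.mulVec, dotProduct]
    exact hmax ‖μ‖ w (norm_nonneg μ) hwnn hwne hwcw
  -- hence specRad B = r
  have hspec : specRad B = r := by
    have hrmem : r ∈ (fun μ : ℂ => ‖μ‖) '' spectrum ℂ M := by
      refine ⟨(r : ℂ), hrspec, ?_⟩
      simp [Complex.norm_real, abs_of_nonneg hr0]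
    have hbdd : BddAbove ((fun μ : ℂ => ‖μ‖) '' spectrum ℂ M) := by
      refine ⟨r, ?_⟩
      rintro t ⟨μ, hμ, rfl⟩
      exact hbound μ hμ
    refine le_antisymm ?_ ?_
    · apply csSup_le ⟨r, hrmem⟩
      rintro t ⟨μ, hμ, rfl⟩
      exact hbound μ hμ
    · exact le_csSup hbdd hrmem
  rw [hspec]
  exact ⟨x, hxpos, heig⟩
end
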